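/- arXiv:1612.02574 — 6 statements merged into one kernel-verified Lean document; each statement's English description precedes it below -/
import Mathlib

section
/- For positive real constants a, b, c, the function g(x) = x * log₂(1 + a/(b x + c)) is strictly increasing on (0, ∞). -/
/-!
With `u = b x + c`, we have `b log 2 · g x = (u - c) log (1 + a/u) = u log (1 + a/u) - c log (1 + a/u)`.
The first term increases in `u`: its derivative `log (1 + a/u) - a/(u + a)` is positive because
`log y > 1 - 1/y` for `y ≠ 1`. The second increases because `log (1 + a/u)` decreases.
-/

open Real Set

lemma div_add_lt_log_one_add_div {a u : ℝ} (ha : 0 < a) (hu : 0 < u) :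
    a / (u + a) < log (1 + a / u) := by
  have hne : (1 + a / u)⁻¹ ≠ 1 := by simp [ha.ne', hu.ne']
  have h := log_lt_sub_one_of_pos (by positivity) hne
  have heq : (1 + a / u)⁻¹ - 1 = -(a / (u + a)) := by field_simp; ring
  rw [log_inv, heq] at h
  linarith

lemma hasDerivAt_mul_log_one_add_div {a u : ℝ} (ha : 0 ≤ a) (hu : 0 < u) :
    HasDerivAt (fun u => u * log (1 + a / u)) (log (1 + a / u) - a / (u + a)) u := by
  have hinner : HasDerivAt (fun u => 1 + a / u) (-(a / u ^ 2)) u := by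
    simpa [div_eq_mul_inv] using ((hasDerivAt_inv hu.ne').const_mul a).const_add 1
  refine ((hasDerivAt_id' u).mul (hinner.log (by positivity))).congr_deriv ?_
  field_simp
  ring

lemma strictMonoOn_mul_log_one_add_div {a : ℝ} (ha : 0 < a) :
    StrictMonoOn (fun u => u * log (1 + a / u)) (Ioi 0) := by
  refine strictMonoOn_of_deriv_pos (convex_Ioi 0)
    (fun u hu => (hasDerivAt_mul_log_one_add_div ha.le hu).continuousAt.continuousWithinAt)
    fun u hu => ?_
  rw [interior_Ioi] at hu
  rw [(hasDerivAt_mul_log_one_add_div ha.le hu).deriv]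
  exact sub_pos.mpr (div_add_lt_log_one_add_div ha hu)

lemma strictAntiOn_log_one_add_div {a : ℝ} (ha : 0 < a) :
    StrictAntiOn (fun u => log (1 + a / u)) (Ioi 0) := fun u (hu : 0 < u) v _ huv =>
  log_lt_log (by have : 0 < v := hu.trans huv; positivity) (by gcongr)

lemma strictMonoOn_sub_mul_log_one_add_div {a c : ℝ} (ha : 0 < a) (hc : 0 ≤ c) :
    StrictMonoOn (fun u => (u - c) * log (1 + a / u)) (Ioi 0) := by
  intro u hu v hv huv
  have hmul := strictMonoOn_mul_log_one_add_div ha hu hv huv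
  have hlog := mul_le_mul_of_nonneg_left (strictAntiOn_log_one_add_div ha hu hv huv).le hc
  simp only [sub_mul] at hmul hlog ⊢
  linarith

/-- For positive constants `a b c`, `x ↦ x * log₂ (1 + a/(b x + c))` is strictly
increasing on `(0, ∞)`. -/
theorem strictMonoOn_mul_logb (a b c : ℝ) (ha : 0 < a) (hb : 0 < b) (hc : 0 < c) :
    StrictMonoOn (fun x : ℝ => x * Real.logb 2 (1 + a / (b * x + c))) (Set.Ioi 0) := by
  have hrewrite : ∀ x : ℝ, x * logb 2 (1 + a / (b * x + c)) =
      ((b * x + c) - c) * log (1 + a / (b * x + c)) / (b * log 2) := by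
    intro x
    rw [logb]
    field_simp
    ring
  intro x (hx : 0 < x) y (hy : 0 < y) hxy
  simp only [hrewrite]
  gcongr ?_ / _
  exact strictMonoOn_sub_mul_log_one_add_div ha hc.le (by positivity : 0 < b * x + c)
    (by positivity : 0 < b * y + c) (by gcongr)
end

section
/- For a, b, c > 0 and 0 < x < y, we have x * log₂(1 + a/(b x + c)) < y * log₂(1 + a/(b y + c)). -/
/-!
Substituting `u = b x + c`, we get `b · x log(1 + a/u) = u log(1 + a/u) - c log(1 + a/u)`.
The first term is strictly increasing in `u` because `s ↦ log(1 + s)/s` is strictly decreasing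
(secant slopes of the strictly concave `log` at `1`), and the second is nonincreasing.
-/

open Real

lemma mul_log_one_add_div_lt {a u v : ℝ} (ha : 0 < a) (hu : 0 < u) (huv : u < v) :
    u * log (1 + a / u) < v * log (1 + a / v) := by
  have hv : 0 < v := hu.trans huv
  have hslope := strictConcaveOn_log_Ioi.secant_strict_mono (a := 1)
    (x := 1 + a / v) (y := 1 + a / u) (Set.mem_Ioi.2 one_pos) (Set.mem_Ioi.2 (by positivity))
    (Set.mem_Ioi.2 (by positivity))
    (by simp [ha.ne', hv.ne']) (by simp [ha.ne', hu.ne']) (by gcongr)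
  simp only [log_one, sub_zero, add_sub_cancel_left, div_div_eq_mul_div] at hslope
  rw [div_lt_div_iff_of_pos_right ha] at hslope
  linarith

lemma log_one_add_div_le_log_one_add_div {a u v : ℝ} (ha : 0 ≤ a) (hu : 0 < u) (huv : u ≤ v) :
    log (1 + a / v) ≤ log (1 + a / u) := by
  have hv : 0 < v := hu.trans_le huv
  gcongr

lemma sub_mul_log_one_add_div_lt {a c u v : ℝ} (ha : 0 < a) (hc : 0 ≤ c) (hu : 0 < u)
    (huv : u < v) : (u - c) * log (1 + a / u) < (v - c) * log (1 + a / v) := by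
  have hlog := log_one_add_div_le_log_one_add_div ha.le hu huv.le
  rw [sub_mul, sub_mul]
  linarith [mul_log_one_add_div_lt ha hu huv, mul_le_mul_of_nonneg_left hlog hc]

/-- For `a, b, c > 0` and `0 < x < y`,
`x log₂(1 + a/(bx+c)) < y log₂(1 + a/(by+c))`. -/
theorem mul_logb_lt_mul_logb (a b c x y : ℝ) (ha : 0 < a) (hb : 0 < b) (hc : 0 < c)
    (hx : 0 < x) (hxy : x < y) :
    x * Real.logb 2 (1 + a / (b * x + c)) < y * Real.logb 2 (1 + a / (b * y + c)) := by
  have key := sub_mul_log_one_add_div_lt ha hc.le (u := b * x + c) (v := b * y + c)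
    (by positivity) (by gcongr)
  simp only [add_sub_cancel_right, mul_assoc] at key
  have hlog2 : 0 < log 2 := log_pos one_lt_two
  simp only [Real.logb, ← mul_div_assoc]
  gcongr ?_ / _
  exact lt_of_mul_lt_mul_left key hb.le
end

section
/- Let K ≥ 1, and for each k let w_k > 0, γ_k > 0, β_k > 0, and let M > K > 0. Suppose positive reals p_1, …, p_K satisfy w_k p_k γ_k = x for all k (a common value x > 0). Then for each k, the ZF weighted SINR w_k (M-K) p_k γ_k / (1 + Σ_j p_j(β_j - γ_j)) can be written as (M-K) / (1/(w_k p_k γ_k) + Σ_j p_j β_j/(w_k p_k γ_k) - Σ_j 1/w_j). Consequently, maximizing the minimum ZF weighted SINR is equivalent to maximizing the minimum of w_k (M-K) p_k γ_k / (1 + Σ_j p_j β_j): both problems have the same optimal power allocations. -/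
/-- Auxiliary: for an equal-weighted-power allocation, the interference sum simplifies. -/
lemma zf_aux_sum (K : ℕ) (w β γ p : Fin K → ℝ) (hw : ∀ k, 0 < w k) (x : ℝ)
    (hcom : ∀ k, w k * p k * γ k = x) :
    (∑ j, p j * (β j - γ j)) = (∑ j, p j * β j) - x * ∑ j, 1 / w j := by
  have h1 : ∀ j, p j * γ j = x / w j := by
    intro j
    rw [eq_div_iff (hw j).ne']
    linear_combination hcom j
  have h2 : (∑ j, p j * (β j - γ j)) = (∑ j, p j * β j) - ∑ j, p j * γ j := by
    rw [← Finset.sum_sub_distrib]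
    exact Finset.sum_congr rfl fun j _ => by ring
  rw [h2]
  congr 1
  rw [Finset.mul_sum]
  exact Finset.sum_congr rfl fun j _ => by rw [h1 j]; field_simp

/-- ZF max-min reformulation. If all weighted signal powers `w k * p k * γ k` are equal to a
common value `x`, then each ZF weighted SINR equals
`(M-K)/(1/(w k p k γ k) + (Σ p j β j)/(w k p k γ k) - Σ 1/w j)`.  Consequently, comparing two
such allocations, the minimum ZF weighted SINR ordering coincides with the ordering of the
minimum of the simplified SINRs `w k (M-K) p k γ k / (1 + Σ p j β j)`. -/
theorem zf_maxmin_equivalence (K : ℕ) (hK : 0 < K) (M : ℝ) (hMK : (K : ℝ) < M)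
    (w β : Fin K → ℝ) (hw : ∀ k, 0 < w k) (hβ : ∀ k, 0 < β k)
    (γ γ' : Fin K → ℝ) (hγ : ∀ k, 0 < γ k ∧ γ k < β k) (hγ' : ∀ k, 0 < γ' k ∧ γ' k < β k)
    (p p' : Fin K → ℝ) (hp : ∀ k, 0 < p k) (hp' : ∀ k, 0 < p' k)
    (x x' : ℝ) (hx : 0 < x) (hx' : 0 < x')
    (hcom : ∀ k, w k * p k * γ k = x) (hcom' : ∀ k, w k * p' k * γ' k = x') :
    (∀ k, w k * ((M - K) * p k * γ k) / (1 + ∑ j, p j * (β j - γ j)) =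
        (M - K) / (1 / (w k * p k * γ k) + (∑ j, p j * β j) / (w k * p k * γ k)
          - ∑ j, 1 / w j)) ∧
      ((⨅ k, w k * ((M - K) * p k * γ k) / (1 + ∑ j, p j * (β j - γ j))) ≤
          (⨅ k, w k * ((M - K) * p' k * γ' k) / (1 + ∑ j, p' j * (β j - γ' j))) ↔
        (⨅ k, w k * ((M - K) * p k * γ k) / (1 + ∑ j, p j * β j)) ≤
          ⨅ k, w k * ((M - K) * p' k * γ' k) / (1 + ∑ j, p' j * β j)) := by
  have hne : Nonempty (Fin K) := ⟨⟨0, hK⟩⟩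
  set S : ℝ := ∑ j, 1 / w j with hS
  set E : ℝ := ∑ j, p j * β j with hE
  set E' : ℝ := ∑ j, p' j * β j with hE'
  have hMKpos : 0 < M - K := by linarith
  have hsum : (∑ j, p j * (β j - γ j)) = E - x * S :=
    zf_aux_sum K w β γ p hw x hcom
  have hsum' : (∑ j, p' j * (β j - γ' j)) = E' - x' * S :=
    zf_aux_sum K w β γ' p' hw x' hcom'
  have hDpos : 0 < 1 + ∑ j, p j * (β j - γ j) := by
    have : 0 ≤ ∑ j, p j * (β j - γ j) :=
      Finset.sum_nonneg fun j _ => by nlinarith [(hγ j).1, (hγ j).2, hp j]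
    linarith
  have hDpos' : 0 < 1 + ∑ j, p' j * (β j - γ' j) := by
    have : 0 ≤ ∑ j, p' j * (β j - γ' j) :=
      Finset.sum_nonneg fun j _ => by nlinarith [(hγ' j).1, (hγ' j).2, hp' j]
    linarith
  have hEpos : 0 < 1 + E := by
    have : 0 ≤ E := Finset.sum_nonneg fun j _ => by nlinarith [hβ j, hp j]
    linarith
  have hEpos' : 0 < 1 + E' := by
    have : 0 ≤ E' := Finset.sum_nonneg fun j _ => by nlinarith [hβ j, hp' j]
    linarith
  have hD : 0 < 1 + E - x * S := by have := hDpos; rw [hsum] at this; linarith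
  have hD' : 0 < 1 + E' - x' * S := by have := hDpos'; rw [hsum'] at this; linarith
  -- Part 1
  have part1 : ∀ k, w k * ((M - K) * p k * γ k) / (1 + ∑ j, p j * (β j - γ j)) =
      (M - K) / (1 / (w k * p k * γ k) + E / (w k * p k * γ k) - S) := by
    intro k
    have h1 : w k * ((M - K) * p k * γ k) = (M - K) * x := by
      linear_combination (M - K) * hcom k
    rw [h1, hcom k, hsum]
    have hden : 1 / x + E / x - S = (1 + E - x * S) / x := by
      field_simp
    rw [hden, div_div_eq_mul_div]
    ring
  refine ⟨part1, ?_⟩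
  -- Part 2 : the infima are constants
  have part1' : ∀ k, w k * ((M - K) * p' k * γ' k) / (1 + ∑ j, p' j * (β j - γ' j)) =
      (M - K) * x' / (1 + E' - x' * S) := by
    intro k
    have h1 : w k * ((M - K) * p' k * γ' k) = (M - K) * x' := by
      linear_combination (M - K) * hcom' k
    rw [h1, hsum']; ring_nf
  have c1 : (⨅ k, w k * ((M - K) * p k * γ k) / (1 + ∑ j, p j * (β j - γ j))) =
      (M - K) * x / (1 + E - x * S) := by
    have h : ∀ k : Fin K, w k * ((M - K) * p k * γ k) / (1 + ∑ j, p j * (β j - γ j)) =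
        (M - K) * x / (1 + E - x * S) := by
      intro k
      have h1 : w k * ((M - K) * p k * γ k) = (M - K) * x := by
        linear_combination (M - K) * hcom k
      rw [h1, hsum]; ring_nf
    simp only [h, ciInf_const]
  have c2 : (⨅ k, w k * ((M - K) * p' k * γ' k) / (1 + ∑ j, p' j * (β j - γ' j))) =
      (M - K) * x' / (1 + E' - x' * S) := by
    simp only [part1', ciInf_const]
  have c3 : (⨅ k, w k * ((M - K) * p k * γ k) / (1 + E)) = (M - K) * x / (1 + E) := by
    have h : ∀ k : Fin K, w k * ((M - K) * p k * γ k) / (1 + E) =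
        (M - K) * x / (1 + E) := by
      intro k
      congr 1
      linear_combination (M - K) * hcom k
    simp only [h, ciInf_const]
  have c4 : (⨅ k, w k * ((M - K) * p' k * γ' k) / (1 + E')) = (M - K) * x' / (1 + E') := by
    have h : ∀ k : Fin K, w k * ((M - K) * p' k * γ' k) / (1 + E') =
        (M - K) * x' / (1 + E') := by
      intro k
      congr 1
      linear_combination (M - K) * hcom' k
    simp only [h, ciInf_const]
  rw [c1, c2, c3, c4]
  rw [div_le_div_iff₀ hD hD', div_le_div_iff₀ hEpos hEpos']
  constructor <;> intro h <;> nlinarith [h]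
end

section
/- The optimization problem: maximize Σ_k w_k log₂(1 + a_k x_k) subject to 0 ≤ x_k ≤ β_k P_k s for all k and Σ_{j=1}^K x_j = 1 - s, over variables (x_1,…,x_K, s), is a convex optimization problem (the objective is concave in (x, s) and the feasible set is convex), and its optimal value equals the optimal value of maximize Σ_k w_k log₂(1 + a_k β_k p_k/(1 + Σ_j β_j p_j)) subject to 0 ≤ p_k ≤ P_k. -/
/-!
Each summand of the objective is a concave function (the logarithm of a nonnegative affine
function) of a single coordinate, and the feasible set is cut out by linear constraints.
For the optimal values, the substitution `x_k = β_k p_k / (1 + Σ β_j p_j)`,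
`s = 1 / (1 + Σ β_j p_j)` maps the power box onto the feasible set and turns one objective
into the other. It is onto because feasibility forces `s > 0` (otherwise every `x_k = 0`
and `s = 1`), so that `p_k = x_k / (β_k s)` is a preimage.
-/

open Real Set

noncomputable section

theorem ConcaveOn.fun_sum {E ι : Type*} [AddCommGroup E] [Module ℝ E] {s : Set E}
    (hs : Convex ℝ s) {t : Finset ι} {f : ι → E → ℝ} (hf : ∀ i ∈ t, ConcaveOn ℝ s (f i)) :
    ConcaveOn ℝ s fun x => ∑ i ∈ t, f i x := by
  rw [← Finset.sum_fn]
  exact Finset.sum_induction f (ConcaveOn ℝ s) (fun _ _ => ConcaveOn.add) (concaveOn_const 0 hs) hf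

theorem concaveOn_logb_one_add_mul {b a : ℝ} (hb : 1 < b) (ha : 0 ≤ a) :
    ConcaveOn ℝ (Ici 0) fun t : ℝ => logb b (1 + a * t) := by
  refine ⟨convex_Ici 0, fun x (hx : 0 ≤ x) y (hy : 0 ≤ y) μ ν hμ hν hμν => ?_⟩
  have hx' : 1 + a * x ∈ Ioi 0 := by have := mul_nonneg ha hx; simp only [mem_Ioi]; linarith
  have hy' : 1 + a * y ∈ Ioi 0 := by have := mul_nonneg ha hy; simp only [mem_Ioi]; linarith
  have hlog := strictConcaveOn_log_Ioi.concaveOn.2 hx' hy' hμ hν hμν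
  have hcombo : μ • (1 + a * x) + ν • (1 + a * y) = 1 + a * (μ • x + ν • y) := by
    simp only [smul_eq_mul]; linear_combination hμν
  rw [hcombo] at hlog
  simp only [smul_eq_mul, logb] at hlog ⊢
  rw [mul_div_assoc', mul_div_assoc', ← add_div]
  exact div_le_div_of_nonneg_right hlog (log_pos hb).le

theorem concaveOn_sum_mul_logb_one_add_mul {ι : Type*} [Fintype ι] {b : ℝ} (hb : 1 < b)
    {w a : ι → ℝ} (hw : ∀ k, 0 ≤ w k) (ha : ∀ k, 0 ≤ a k) :
    ConcaveOn ℝ (Ici 0) fun x : ι → ℝ => ∑ k, w k * logb b (1 + a k * x k) :=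
  ConcaveOn.fun_sum (convex_Ici 0) fun k _ =>
    (((concaveOn_logb_one_add_mul hb (ha k)).comp_linearMap
      (LinearMap.proj (R := ℝ) (φ := fun _ : ι => ℝ) k)).smul (hw k)).subset
      (fun x (hx : 0 ≤ x) => hx k) (convex_Ici 0)

section Reformulation

variable {ι : Type*} [Fintype ι]

def sumSEFeasible (β P : ι → ℝ) : Set ((ι → ℝ) × ℝ) :=
  {q | (∀ k, 0 ≤ q.1 k ∧ q.1 k ≤ β k * P k * q.2) ∧ ∑ j, q.1 j = 1 - q.2}

def normalizedPower (β p : ι → ℝ) : (ι → ℝ) × ℝ :=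
  (fun k => β k * p k / (1 + ∑ j, β j * p j), 1 / (1 + ∑ j, β j * p j))

theorem convex_sumSEFeasible (β P : ι → ℝ) : Convex ℝ (sumSEFeasible β P) := by
  rintro q ⟨hq, hq_sum⟩ r ⟨hr, hr_sum⟩ μ ν hμ hν hμν
  refine ⟨fun k => ⟨?_, ?_⟩, ?_⟩
  · exact add_nonneg (mul_nonneg hμ (hq k).1) (mul_nonneg hν (hr k).1)
  · show μ * q.1 k + ν * r.1 k ≤ β k * P k * (μ * q.2 + ν * r.2)
    linarith [mul_le_mul_of_nonneg_left (hq k).2 hμ, mul_le_mul_of_nonneg_left (hr k).2 hν]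
  · show ∑ j, (μ * q.1 j + ν * r.1 j) = 1 - (μ * q.2 + ν * r.2)
    rw [Finset.sum_add_distrib, ← Finset.mul_sum, ← Finset.mul_sum, hq_sum, hr_sum]
    linear_combination hμν

theorem normalizedPower_mem_sumSEFeasible {β P p : ι → ℝ} (hβ : ∀ k, 0 ≤ β k)
    (hp : ∀ k, 0 ≤ p k ∧ p k ≤ P k) : normalizedPower β p ∈ sumSEFeasible β P := by
  have hD : 0 < 1 + ∑ j, β j * p j := by
    have := Finset.sum_nonneg fun j (_ : j ∈ Finset.univ) => mul_nonneg (hβ j) (hp j).1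
    linarith
  refine ⟨fun k => ⟨?_, ?_⟩, ?_⟩
  · exact div_nonneg (mul_nonneg (hβ k) (hp k).1) hD.le
  · show β k * p k / _ ≤ β k * P k * (1 / _)
    rw [mul_one_div]
    gcongr
    exacts [hβ k, (hp k).2]
  · show ∑ j, β j * p j / _ = 1 - 1 / _
    rw [← Finset.sum_div]
    field_simp
    ring

theorem snd_pos_of_mem_sumSEFeasible {β P : ι → ℝ} (hβP : ∀ k, 0 ≤ β k * P k)
    {q : (ι → ℝ) × ℝ} (hq : q ∈ sumSEFeasible β P) : 0 < q.2 := by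
  by_contra! hs
  have hx : ∀ k, q.1 k = 0 := fun k =>
    le_antisymm ((hq.1 k).2.trans (mul_nonpos_of_nonneg_of_nonpos (hβP k) hs)) (hq.1 k).1
  have := hq.2
  simp only [hx, Finset.sum_const_zero] at this
  linarith

theorem normalizedPower_div {β : ι → ℝ} (hβ : ∀ k, β k ≠ 0) {q : (ι → ℝ) × ℝ}
    (hsum : ∑ j, q.1 j = 1 - q.2) (hs : q.2 ≠ 0) :
    normalizedPower β (fun k => q.1 k / (β k * q.2)) = q := by
  have hD : 1 + ∑ j, β j * (q.1 j / (β j * q.2)) = 1 / q.2 := by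
    have : ∀ j, β j * (q.1 j / (β j * q.2)) = q.1 j / q.2 := fun j => by
      field_simp [hβ j]
    simp only [this, ← Finset.sum_div, hsum]
    field_simp
    ring
  ext k
  · simp only [normalizedPower, hD]
    field_simp [hβ k]
  · simp only [normalizedPower, hD, one_div_one_div]

theorem image_normalizedPower {β P : ι → ℝ} (hβ : ∀ k, 0 < β k) (hP : ∀ k, 0 ≤ P k) :
    normalizedPower β '' {p | ∀ k, 0 ≤ p k ∧ p k ≤ P k} = sumSEFeasible β P := by
  refine subset_antisymm ?_ fun q hq => ?_
  · rintro _ ⟨p, hp, rfl⟩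
    exact normalizedPower_mem_sumSEFeasible (fun k => (hβ k).le) hp
  · have hs := snd_pos_of_mem_sumSEFeasible (fun k => mul_nonneg (hβ k).le (hP k)) hq
    refine ⟨fun k => q.1 k / (β k * q.2), fun k => ⟨?_, ?_⟩,
      normalizedPower_div (fun k => (hβ k).ne') hq.2 hs.ne'⟩
    · exact div_nonneg (hq.1 k).1 (mul_pos (hβ k) hs).le
    · rw [div_le_iff₀ (mul_pos (hβ k) hs)]
      linarith [(hq.1 k).2]

end Reformulation

end

/-- The reformulated sum-SE problem is convex (convex feasible set, concave objective) and
has the same optimal value as the original data-power problem. -/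
theorem sumSE_convex_reformulation (K : ℕ) (w a β P : Fin K → ℝ)
    (hw : ∀ k, 0 < w k) (ha : ∀ k, 0 < a k) (hβ : ∀ k, 0 < β k) (hP : ∀ k, 0 < P k) :
    Convex ℝ {q : (Fin K → ℝ) × ℝ |
        (∀ k, 0 ≤ q.1 k ∧ q.1 k ≤ β k * P k * q.2) ∧ (∑ j, q.1 j) = 1 - q.2} ∧
    ConcaveOn ℝ
      {q : (Fin K → ℝ) × ℝ |
        (∀ k, 0 ≤ q.1 k ∧ q.1 k ≤ β k * P k * q.2) ∧ (∑ j, q.1 j) = 1 - q.2}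
      (fun q => ∑ k, w k * Real.logb 2 (1 + a k * q.1 k)) ∧
    sSup ((fun q : (Fin K → ℝ) × ℝ => ∑ k, w k * Real.logb 2 (1 + a k * q.1 k)) ''
        {q | (∀ k, 0 ≤ q.1 k ∧ q.1 k ≤ β k * P k * q.2) ∧ (∑ j, q.1 j) = 1 - q.2}) =
      sSup ((fun p : Fin K → ℝ =>
          ∑ k, w k * Real.logb 2 (1 + a k * (β k * p k / (1 + ∑ j, β j * p j)))) ''
        {p | ∀ k, 0 ≤ p k ∧ p k ≤ P k}) := by
  have hconvex : Convex ℝ (sumSEFeasible β P) := convex_sumSEFeasible β P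
  refine ⟨hconvex, ?_, ?_⟩
  · exact ((concaveOn_sum_mul_logb_one_add_mul one_lt_two (fun k => (hw k).le)
      fun k => (ha k).le).comp_linearMap (LinearMap.fst ℝ _ ℝ)).subset
      (fun q hq k => (hq.1 k).1) hconvex
  · show sSup (_ '' sumSEFeasible β P) = _
    rw [← image_normalizedPower hβ fun k => (hP k).le, Set.image_image]
    rfl
end

section
/- If r : D → ℝ is convex on a convex set D ⊆ ℝ, then its perspective q(y, s) = s · r(y/s) is jointly convex on {(y, s) : s > 0, y/s ∈ D}. In particular, q(y,s) = (Eβs + (T-K)y - √(E²β²s² - 2(T-K)(Eβ+2)ys + (T-K)²y²)) / (2(T-K)β) is jointly convex in (y, s) for s > 0 on the domain where the square root argument is nonnegative. -/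
/-!
The perspective `(y, s) ↦ s • r (s⁻¹ • y)` is convex because the combination
`a • (y₁, s₁) + b • (y₂, s₂)` is sent to a convex combination of `s₁⁻¹ • y₁` and `s₂⁻¹ • y₂`
with weights `a s₁ / s` and `b s₂ / s`, `s = a s₁ + b s₂`, and multiplying Jensen's inequality
for `r` at these weights by `s` gives Jensen's inequality for the perspective.

For the concrete `r`, completing the square gives
`E²β² - 2(T-K)(Eβ+2)x + (T-K)²x² = u² - c` with `u = (T-K)x - (Eβ+2)` and `c = 4(Eβ+1) > 0`.
On a convex set where `u² ≥ c`, `u` keeps one sign, so `u₁u₂ ≥ c`; this gives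
`√(u₁² - c)√(u₂² - c) ≤ u₁u₂ - c`, which is exactly what concavity of `√(u² - c)` needs.
Hence `r` is convex, and its perspective is the given `q` by homogeneity of the square root.
-/

section Perspective

variable {𝕜 E β : Type*} [Field 𝕜] [LinearOrder 𝕜] [IsStrictOrderedRing 𝕜]
  [AddCommGroup E] [Module 𝕜 E] [AddCommGroup β] [PartialOrder β] [Module 𝕜 β]
  [PosSMulMono 𝕜 β]

omit [LinearOrder 𝕜] [IsStrictOrderedRing 𝕜] in
theorem inv_smul_add_smul_eq {s₁ s₂ : 𝕜} (hs₁ : s₁ ≠ 0) (hs₂ : s₂ ≠ 0) (a b : 𝕜) (y₁ y₂ : E) :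
    (a * s₁ + b * s₂)⁻¹ • (a • y₁ + b • y₂) =
      (a * s₁ / (a * s₁ + b * s₂)) • s₁⁻¹ • y₁ + (b * s₂ / (a * s₁ + b * s₂)) • s₂⁻¹ • y₂ := by
  simp only [smul_add, smul_smul]
  congr 2 <;> field_simp

theorem ConvexOn.perspective {D : Set E} {r : E → β} (hr : ConvexOn 𝕜 D r) :
    ConvexOn 𝕜 {q : E × 𝕜 | 0 < q.2 ∧ q.2⁻¹ • q.1 ∈ D} (fun q => q.2 • r (q.2⁻¹ • q.1)) := by
  suffices h : ∀ ⦃p : E × 𝕜⦄, 0 < p.2 → p.2⁻¹ • p.1 ∈ D → ∀ ⦃q : E × 𝕜⦄, 0 < q.2 →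
      q.2⁻¹ • q.1 ∈ D → ∀ ⦃a b : 𝕜⦄, 0 ≤ a → 0 ≤ b → a + b = 1 →
        let z := a • p + b • q
        (0 < z.2 ∧ z.2⁻¹ • z.1 ∈ D) ∧
          z.2 • r (z.2⁻¹ • z.1) ≤ a • p.2 • r (p.2⁻¹ • p.1) + b • q.2 • r (q.2⁻¹ • q.1) from
    ⟨fun p hp q hq a b ha hb hab => (h hp.1 hp.2 hq.1 hq.2 ha hb hab).1,
      fun p hp q hq a b ha hb hab => (h hp.1 hp.2 hq.1 hq.2 ha hb hab).2⟩
  rintro ⟨y₁, s₁⟩ hs₁ hx₁ ⟨y₂, s₂⟩ hs₂ hx₂ a b ha hb hab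
  simp only [Prod.smul_mk, Prod.mk_add_mk, smul_eq_mul] at *
  have hs : 0 < a * s₁ + b * s₂ := convex_Ioi (0 : 𝕜) hs₁ hs₂ ha hb hab
  have hθ : a * s₁ / (a * s₁ + b * s₂) + b * s₂ / (a * s₁ + b * s₂) = 1 := by field_simp
  rw [inv_smul_add_smul_eq hs₁.ne' hs₂.ne']
  refine ⟨⟨hs, hr.1 hx₁ hx₂ (by positivity) (by positivity) hθ⟩, ?_⟩
  calc (a * s₁ + b * s₂) • r ((a * s₁ / (a * s₁ + b * s₂)) • s₁⁻¹ • y₁ +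
          (b * s₂ / (a * s₁ + b * s₂)) • s₂⁻¹ • y₂)
      ≤ (a * s₁ + b * s₂) • ((a * s₁ / (a * s₁ + b * s₂)) • r (s₁⁻¹ • y₁) +
          (b * s₂ / (a * s₁ + b * s₂)) • r (s₂⁻¹ • y₂)) :=
        smul_le_smul_of_nonneg_left (hr.2 hx₁ hx₂ (by positivity) (by positivity) hθ) hs.le
    _ = a • s₁ • r (s₁⁻¹ • y₁) + b • s₂ • r (s₂⁻¹ • y₂) := by
        simp only [smul_add, smul_smul]
        congr 2 <;> field_simp

end Perspective

theorem Convex.le_mul_of_le_sq {S : Set ℝ} {c : ℝ} (hS : Convex ℝ S) (hc : 0 < c)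
    (h : ∀ x ∈ S, c ≤ x ^ 2) {x y : ℝ} (hx : x ∈ S) (hy : y ∈ S) : c ≤ x * y := by
  wlog hxy : x ≤ y generalizing x y
  · rw [mul_comm]
    exact this hy hx (le_of_not_ge hxy)
  rcases lt_or_ge 0 x with hx₀ | hx₀
  · nlinarith [h x hx]
  rcases lt_or_ge y 0 with hy₀ | hy₀
  · nlinarith [h y hy]
  have := h 0 (hS.ordConnected.out hx hy ⟨hx₀, hy₀⟩)
  nlinarith

theorem sqrt_sq_sub_mul_sqrt_sq_sub_le {c x y : ℝ} (hc : 0 ≤ c) (hx : c ≤ x ^ 2)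
    (hxy : c ≤ x * y) : √(x ^ 2 - c) * √(y ^ 2 - c) ≤ x * y - c := by
  rw [← Real.sqrt_mul (sub_nonneg.2 hx), Real.sqrt_le_left (sub_nonneg.2 hxy)]
  nlinarith [mul_nonneg hc (sq_nonneg (x - y))]

theorem concaveOn_sqrt_sq_sub {S : Set ℝ} {c : ℝ} (hS : Convex ℝ S) (hc : 0 < c)
    (h : ∀ x ∈ S, c ≤ x ^ 2) : ConcaveOn ℝ S (fun x => √(x ^ 2 - c)) := by
  refine ⟨hS, fun x hx y hy a b ha hb hab => ?_⟩
  simp only [smul_eq_mul]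
  have hp := Real.sq_sqrt (sub_nonneg.2 (h x hx))
  have hq := Real.sq_sqrt (sub_nonneg.2 (h y hy))
  have hpq := sqrt_sq_sub_mul_sqrt_sq_sub_le hc.le (h x hx) (hS.le_mul_of_le_sq hc h hx hy)
  have hexpand : (a * x + b * y) ^ 2 - c - (a * √(x ^ 2 - c) + b * √(y ^ 2 - c)) ^ 2
      = 2 * (a * b) * (x * y - c - √(x ^ 2 - c) * √(y ^ 2 - c)) := by
    linear_combination (-a ^ 2) * hp - b ^ 2 * hq + c * (a + b + 1) * hab
  apply Real.le_sqrt_of_sq_le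
  nlinarith [mul_nonneg (mul_nonneg ha hb) (sub_nonneg.2 hpq)]

theorem convexOn_affine_sub_sqrt_quadratic {A E β : ℝ} (hA : 0 < A) (hβ : 0 < β)
    (hEβ : -1 < E * β) {D : Set ℝ} (hD : Convex ℝ D)
    (hdisc : ∀ x ∈ D, 0 ≤ E ^ 2 * β ^ 2 - 2 * A * (E * β + 2) * x + A ^ 2 * x ^ 2) :
    ConvexOn ℝ D (fun x => (E * β + A * x -
      √(E ^ 2 * β ^ 2 - 2 * A * (E * β + 2) * x + A ^ 2 * x ^ 2)) / (2 * A * β)) := by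
  let u : ℝ →ᵃ[ℝ] ℝ := A • AffineMap.id ℝ ℝ - AffineMap.const ℝ ℝ (E * β + 2)
  have hu (x : ℝ) : u x = A * x - (E * β + 2) := rfl
  have hquad (x : ℝ) : E ^ 2 * β ^ 2 - 2 * A * (E * β + 2) * x + A ^ 2 * x ^ 2 =
      u x ^ 2 - 4 * (E * β + 1) := by
    rw [hu]
    ring
  have huD : Convex ℝ (u '' D) := hD.affine_image u
  have hφ : ConvexOn ℝ (u '' D) (fun v => v - √(v ^ 2 - 4 * (E * β + 1))) :=
    (convexOn_id huD).sub <| concaveOn_sqrt_sq_sub huD (by linarith) <| by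
      rintro _ ⟨x, hx, rfl⟩
      linarith [hdisc x hx, hquad x]
  refine ((((hφ.comp_affineMap u).subset (Set.subset_preimage_image u D) hD).add_const
    (2 * (E * β + 1))).smul (c := (2 * A * β)⁻¹) (by positivity)).congr fun x _ => ?_
  simp only [Function.comp_apply, Pi.add_apply, smul_eq_mul, hquad]
  rw [hu]
  ring

theorem perspective_convex_general (T K E β : ℝ) (hTK : K < T) (hE : 0 < E)
    (hβ : 0 < β) :
    (∀ (r : ℝ → ℝ) (D : Set ℝ), Convex ℝ D → ConvexOn ℝ D r →
      ConvexOn ℝ {q : ℝ × ℝ | 0 < q.2 ∧ q.1 / q.2 ∈ D}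
        (fun q : ℝ × ℝ => q.2 * r (q.1 / q.2))) ∧
    ∀ D : Set ℝ, Convex ℝ D →
      (∀ x ∈ D, 0 ≤ E ^ 2 * β ^ 2 - 2 * (T - K) * (E * β + 2) * x + (T - K) ^ 2 * x ^ 2) →
      ConvexOn ℝ {q : ℝ × ℝ | 0 < q.2 ∧ q.1 / q.2 ∈ D}
        (fun q : ℝ × ℝ =>
          (E * β * q.2 + (T - K) * q.1 -
            Real.sqrt (E ^ 2 * β ^ 2 * q.2 ^ 2 - 2 * (T - K) * (E * β + 2) * q.1 * q.2 +
              (T - K) ^ 2 * q.1 ^ 2)) / (2 * (T - K) * β)) := by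
  have perspective {r : ℝ → ℝ} {D : Set ℝ} (hr : ConvexOn ℝ D r) :
      ConvexOn ℝ {q : ℝ × ℝ | 0 < q.2 ∧ q.1 / q.2 ∈ D} (fun q => q.2 * r (q.1 / q.2)) := by
    simpa only [smul_eq_mul, inv_mul_eq_div] using hr.perspective
  refine ⟨fun r D _ hr => perspective hr, fun D hD hdisc => ?_⟩
  have hr := convexOn_affine_sub_sqrt_quadratic (sub_pos.2 hTK) hβ
    (by linarith [mul_pos hE hβ]) hD hdisc
  refine (perspective hr).congr ?_
  rintro ⟨y, s⟩ ⟨hs, -⟩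
  have hhom : E ^ 2 * β ^ 2 * s ^ 2 - 2 * (T - K) * (E * β + 2) * y * s + (T - K) ^ 2 * y ^ 2 =
      s ^ 2 * (E ^ 2 * β ^ 2 - 2 * (T - K) * (E * β + 2) * (y / s) +
        (T - K) ^ 2 * (y / s) ^ 2) := by
    field_simp
  dsimp only
  rw [hhom, Real.sqrt_mul (sq_nonneg s), Real.sqrt_sq hs.le]
  field_simp

/-- The perspective `q(y,s) = s · r(y/s)` of a convex function `r` on a convex set `D` is
jointly convex on `{(y, s) | s > 0, y/s ∈ D}`.  In particular, the perspective of
`r(x) = (Eβ + (T-K)x - √(E²β² - 2(T-K)(Eβ+2)x + (T-K)²x²))/(2(T-K)β)`, namely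
`q(y,s) = (Eβs + (T-K)y - √(E²β²s² - 2(T-K)(Eβ+2)ys + (T-K)²y²))/(2(T-K)β)`, is jointly
convex in `(y, s)` for `s > 0` on the domain where the square-root argument is
nonnegative. -/
theorem perspective_convex (T K E β : ℝ) (hK : 0 < K) (hTK : K < T) (hE : 0 < E)
    (hβ : 0 < β) :
    (∀ (r : ℝ → ℝ) (D : Set ℝ), Convex ℝ D → ConvexOn ℝ D r →
      ConvexOn ℝ {q : ℝ × ℝ | 0 < q.2 ∧ q.1 / q.2 ∈ D}
        (fun q : ℝ × ℝ => q.2 * r (q.1 / q.2))) ∧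
    ∀ D : Set ℝ, Convex ℝ D →
      (∀ x ∈ D, 0 ≤ E ^ 2 * β ^ 2 - 2 * (T - K) * (E * β + 2) * x + (T - K) ^ 2 * x ^ 2) →
      ConvexOn ℝ {q : ℝ × ℝ | 0 < q.2 ∧ q.1 / q.2 ∈ D}
        (fun q : ℝ × ℝ =>
          (E * β * q.2 + (T - K) * q.1 -
            Real.sqrt (E ^ 2 * β ^ 2 * q.2 ^ 2 - 2 * (T - K) * (E * β + 2) * q.1 * q.2 +
              (T - K) ^ 2 * q.1 ^ 2)) / (2 * (T - K) * β)) :=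
  perspective_convex_general T K E β hTK hE hβ
end

section
/- Let a_k, β_k, P_k, w_k > 0 for k = 1,…,K and let s₀ = 1/(1 + Σ_j β_j P_j). If (1/(1+Σ_j β_j P_j)) Σ_j β_j P_j · w_j/(1/a_j + β_j P_j s₀) ≤ min_k w_k/(1/a_k + β_k P_k s₀), then x_k = β_k P_k s₀ for all k (i.e., every user transmitting at full data power p_k = P_k) is a global maximizer of Σ_k w_k log₂(1 + a_k β_k p_k/(1 + Σ_j β_j p_j)) over 0 ≤ p_k ≤ P_k. -/
/-!
Each summand `w_k log(1 + a_k x_k)` is concave in the normalized power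
`x_k = β_k p_k / (1 + Σ β_j p_j)`, so it lies below its tangent line at the full-power point `X_k`,
whose slope is `c_k = w_k / (1/a_k + X_k)`. Summing, it suffices that `Σ c_k x_k ≤ Σ c_k X_k`.
The right side is the multiplier `ν = s₀ Σ β_j P_j c_j`, and the left side is the ratio
`Σ c_k β_k p_k / (1 + Σ β_k p_k)`, which equals `ν` at `p = P`. Lowering `p_k` by `δ` removes
`β_k δ` from its denominator and, as `ν ≤ c_k`, at least `ν β_k δ` from its numerator.
-/

open Finset Real

theorem Real.log_le_log_add_sub_div {u v : ℝ} (hu : 0 < u) (hv : 0 < v) :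
    log u ≤ log v + (u - v) / v := by
  have h := log_le_sub_one_of_pos (div_pos hu hv)
  rw [log_div hu.ne' hv.ne'] at h
  rw [sub_div, div_self hv.ne']
  linarith

theorem Real.log_one_add_mul_le_tangent {a x X : ℝ} (ha : 0 < a) (hx : 0 ≤ x) (hX : 0 ≤ X) :
    log (1 + a * x) ≤ log (1 + a * X) + (x - X) / (1 / a + X) := by
  have hv : 0 < 1 + a * X := by positivity
  convert log_le_log_add_sub_div (by positivity : 0 < 1 + a * x) hv using 2
  field_simp
  ring

theorem sum_mul_div_one_add_sum_le {ι : Type*} [Fintype ι] {b B c : ι → ℝ}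
    (hb : ∀ k, 0 ≤ b k) (hbB : ∀ k, b k ≤ B k)
    (hc : ∀ k, (∑ j, B j * c j) / (1 + ∑ j, B j) ≤ c k) :
    (∑ k, b k * c k) / (1 + ∑ k, b k) ≤ (∑ k, B k * c k) / (1 + ∑ k, B k) := by
  set ν := (∑ j, B j * c j) / (1 + ∑ j, B j)
  have hT : 0 < 1 + ∑ k, b k := by linarith [sum_nonneg fun k (_ : k ∈ univ) => hb k]
  have hS : 0 < 1 + ∑ k, B k := by
    linarith [sum_nonneg fun k (_ : k ∈ univ) => (hb k).trans (hbB k)]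
  have hsum : ∑ k, B k * c k = ν * (1 + ∑ k, B k) := by
    simp only [ν, div_mul_cancel₀ _ hS.ne']
  rw [div_le_iff₀ hT]
  calc ∑ k, b k * c k
      = ∑ k, (b k * (c k - ν) + ν * b k) := sum_congr rfl fun k _ => by ring
    _ ≤ ∑ k, (B k * (c k - ν) + ν * b k) := by
        gcongr with k
        exacts [sub_nonneg.mpr (hc k), hbB k]
    _ = ∑ k, B k * c k - ν * ∑ k, B k + ν * ∑ k, b k := by
        simp only [mul_sub, sum_add_distrib, sum_sub_distrib, ← mul_sum, ← sum_mul]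
        ring
    _ = ν * (1 + ∑ k, b k) := by rw [hsum]; ring

theorem sum_mul_log_one_add_mul_le {ι : Type*} [Fintype ι] {a w x X : ι → ℝ}
    (ha : ∀ k, 0 < a k) (hw : ∀ k, 0 ≤ w k) (hx : ∀ k, 0 ≤ x k) (hX : ∀ k, 0 ≤ X k)
    (hlin : ∑ k, w k / (1 / a k + X k) * (x k - X k) ≤ 0) :
    ∑ k, w k * log (1 + a k * x k) ≤ ∑ k, w k * log (1 + a k * X k) := by
  have tangent : ∀ k, w k * log (1 + a k * x k) ≤
      w k * log (1 + a k * X k) + w k / (1 / a k + X k) * (x k - X k) := fun k =>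
    calc _ ≤ w k * (log (1 + a k * X k) + (x k - X k) / (1 / a k + X k)) :=
          mul_le_mul_of_nonneg_left (log_one_add_mul_le_tangent (ha k) (hx k) (hX k)) (hw k)
      _ = _ := by ring
  refine (sum_le_sum fun k _ => tangent k).trans ?_
  rw [sum_add_distrib]
  linarith

theorem full_power_optimal_general (K : ℕ) (a β P w : Fin K → ℝ)
    (ha : ∀ k, 0 < a k) (hβ : ∀ k, 0 < β k) (hw : ∀ k, 0 < w k)
    (hcond : ∀ k, (1 / (1 + ∑ j, β j * P j)) *
        (∑ j, β j * P j * (w j / (1 / a j + β j * P j * (1 / (1 + ∑ i, β i * P i))))) ≤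
      w k / (1 / a k + β k * P k * (1 / (1 + ∑ i, β i * P i)))) :
    ∀ p : Fin K → ℝ, (∀ k, 0 ≤ p k ∧ p k ≤ P k) →
      (∑ k, w k * Real.logb 2 (1 + a k * (β k * p k / (1 + ∑ j, β j * p j)))) ≤
        ∑ k, w k * Real.logb 2 (1 + a k * (β k * P k / (1 + ∑ j, β j * P j))) := by
  intro p hp
  set S := ∑ j, β j * P j
  set T := ∑ j, β j * p j
  simp only [mul_one_div (β _ * P _)] at hcond
  have hbB : ∀ k, β k * p k ≤ β k * P k := fun k => mul_le_mul_of_nonneg_left (hp k).2 (hβ k).le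
  have hb : ∀ k, 0 ≤ β k * p k := fun k => mul_nonneg (hβ k).le (hp k).1
  have hS : 0 < 1 + S := by linarith [sum_nonneg fun k (_ : k ∈ univ) => (hb k).trans (hbB k)]
  have hT : 0 < 1 + T := by linarith [sum_nonneg fun k (_ : k ∈ univ) => hb k]
  have ratio := sum_mul_div_one_add_sum_le (c := fun k => w k / (1 / a k + β k * P k / (1 + S)))
    hb hbB fun k => by rw [← one_div_mul_eq_div]; exact hcond k
  have key := sum_mul_log_one_add_mul_le ha (fun k => (hw k).le)
    (fun k => div_nonneg (hb k) hT.le) (fun k => div_nonneg ((hb k).trans (hbB k)) hS.le) <| by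
      refine Eq.trans_le ?_ (sub_nonpos.mpr ratio)
      rw [sum_div, sum_div, ← sum_sub_distrib]
      exact sum_congr rfl fun k _ => by ring
  simpa only [logb, ← mul_div_assoc, ← sum_div] using
    div_le_div_of_nonneg_right key (log_nonneg one_le_two)

/-- Full-power optimality condition for sum-SE maximization with MRC: with
`s₀ = 1/(1 + Σ β_j P_j)`, if
`s₀ Σ_j β_j P_j w_j/(1/a_j + β_j P_j s₀) ≤ w_k/(1/a_k + β_k P_k s₀)` for every `k`, then
every user transmitting at full power `p_k = P_k` globally maximizes
`Σ w_k log₂(1 + a_k β_k p_k/(1 + Σ β_j p_j))` over `0 ≤ p_k ≤ P_k`. -/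
theorem full_power_optimal (K : ℕ) (a β P w : Fin K → ℝ)
    (ha : ∀ k, 0 < a k) (hβ : ∀ k, 0 < β k) (hP : ∀ k, 0 < P k) (hw : ∀ k, 0 < w k)
    (hcond : ∀ k, (1 / (1 + ∑ j, β j * P j)) *
        (∑ j, β j * P j * (w j / (1 / a j + β j * P j * (1 / (1 + ∑ i, β i * P i))))) ≤
      w k / (1 / a k + β k * P k * (1 / (1 + ∑ i, β i * P i)))) :
    ∀ p : Fin K → ℝ, (∀ k, 0 ≤ p k ∧ p k ≤ P k) →
      (∑ k, w k * Real.logb 2 (1 + a k * (β k * p k / (1 + ∑ j, β j * p j)))) ≤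
        ∑ k, w k * Real.logb 2 (1 + a k * (β k * P k / (1 + ∑ j, β j * P j))) :=
  full_power_optimal_general K a β P w ha hβ hw hcond
end
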